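/- In the linear model η(x,θ) = f(x)ᵀθ on finite 𝒳, for any ξ with M(ξ) invertible and any θ⁽⁰⁾ ∈ ℝ^p, det(M(ξ))^(1/p) equals the minimum over tuples (θ⁽¹⁾,…,θ⁽ᵖ⁾) with nonzero pairwise orthogonal differences from θ⁽⁰⁾ of [(1/p) Σᵢ ‖η(·,θ⁽ⁱ⁾)−η(·,θ⁽⁰⁾)‖²_ξ] / [∏ⱼ ‖θ⁽ʲ⁾−θ⁽⁰⁾‖²]^(1/p). -/

import Mathlib

/-!
Write `vᵢ = θ⁽ⁱ⁾ - θ⁽⁰⁾`, so that the numerator is `(1/p) Σᵢ vᵢᵀ M vᵢ`. For an orthogonal family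
the Gram matrix `B = (vᵢᵀ M vⱼ)` has `det B = det M · ∏ ‖vᵢ‖²`, so Hadamard's inequality
`det B ≤ ∏ Bᵢᵢ` followed by AM–GM on the diagonal gives
`(det M)^(1/p) · (∏ ‖vᵢ‖²)^(1/p) ≤ (1/p) Σᵢ vᵢᵀ M vᵢ`. Equality holds for eigenvectors of `M`
scaled so that `vᵢᵀ M vᵢ = 1`: then `∏ ‖vᵢ‖² = ∏ λᵢ⁻¹ = (det M)⁻¹`.
-/

open Matrix

/-- The information matrix of a design `ξ` on a finite design space. -/
def infoM {X : Type*} [Fintype X] {p : ℕ} (f : X → (Fin p → ℝ)) (ξ : X → ℝ) :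
    Matrix (Fin p) (Fin p) ℝ :=
  ∑ x, ξ x • vecMulVec (f x) (f x)

namespace Real

variable {ι : Type*} [Fintype ι]

theorem prod_rpow_one_div_card_le_sum_div_card [Nonempty ι] {z : ι → ℝ} (hz : ∀ i, 0 ≤ z i) :
    (∏ i, z i) ^ ((1 : ℝ) / Fintype.card ι) ≤ (∑ i, z i) / Fintype.card ι := by
  simpa [one_div] using
    geom_mean_le_arith_mean Finset.univ (fun _ ↦ 1) z (fun _ _ ↦ zero_le_one)
      (by simp [Fintype.card_pos]) (fun i _ ↦ hz i)

theorem prod_le_sum_div_card_pow {z : ι → ℝ} (hz : ∀ i, 0 ≤ z i) :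
    ∏ i, z i ≤ ((∑ i, z i) / Fintype.card ι) ^ Fintype.card ι := by
  cases isEmpty_or_nonempty ι
  · simp
  have hprod : 0 ≤ ∏ i, z i := Finset.prod_nonneg fun i _ ↦ hz i
  calc ∏ i, z i = ((∏ i, z i) ^ ((1 : ℝ) / Fintype.card ι)) ^ Fintype.card ι := by
        rw [one_div, rpow_inv_natCast_pow hprod Fintype.card_ne_zero]
    _ ≤ _ := pow_le_pow_left₀ (rpow_nonneg hprod _)
        (prod_rpow_one_div_card_le_sum_div_card hz) _

end Real

namespace Matrix

variable {n : Type*} [Fintype n]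

theorem of_mul_mul_transpose_apply_self (v : n → n → ℝ) (M : Matrix n n ℝ) (i : n) :
    (of v * M * (of v)ᵀ) i i = v i ⬝ᵥ M *ᵥ v i := by
  simp only [mul_apply', dotProduct_mulVec]
  rfl

variable [DecidableEq n]

theorem PosSemidef.det_le_trace_div_card_pow {A : Matrix n n ℝ} (hA : A.PosSemidef) :
    A.det ≤ (A.trace / Fintype.card n) ^ Fintype.card n := by
  rw [hA.1.det_eq_prod_eigenvalues, hA.1.trace_eq_sum_eigenvalues]
  exact Real.prod_le_sum_div_card_pow hA.eigenvalues_nonneg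

/-- **Hadamard's inequality**. -/
theorem PosSemidef.det_le_prod_diag {A : Matrix n n ℝ} (hA : A.PosSemidef)
    (hdiag : ∀ i, 0 < A i i) : A.det ≤ ∏ i, A i i := by
  -- Rescaling to unit diagonal reduces the claim to `det ≤ (trace / card) ^ card = 1`.
  set E : Matrix n n ℝ := diagonal fun i ↦ (√(A i i))⁻¹
  have hC : (E * A * E).PosSemidef := by
    simpa [E] using hA.conjTranspose_mul_mul_same E
  have hCdiag : ∀ i, (E * A * E) i i = 1 := fun i ↦ by
    simp only [E, diagonal_mul, mul_diagonal]
    field_simp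
    rw [Real.sq_sqrt (hdiag i).le, div_self (hdiag i).ne']
  have htrace : (E * A * E).trace = Fintype.card n := by
    simp [trace, hCdiag]
  have hdetC : (E * A * E).det = A.det * (∏ i, A i i)⁻¹ := by
    simp only [E, det_mul, det_diagonal, ← Finset.prod_inv_distrib]
    rw [mul_comm, ← mul_assoc, ← Finset.prod_mul_distrib]
    simp [← mul_inv, Real.mul_self_sqrt (hdiag _).le, mul_comm]
  have hprod : 0 < ∏ i, A i i := Finset.prod_pos fun i _ ↦ hdiag i
  have hle := hC.det_le_trace_div_card_pow
  cases isEmpty_or_nonempty n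
  · simp
  rw [htrace, div_self (by positivity), one_pow, hdetC] at hle
  rwa [← div_eq_mul_inv, div_le_one hprod] at hle

theorem of_mul_transpose_eq_diagonal {v : n → n → ℝ}
    (hv : ∀ i j, i ≠ j → v i ⬝ᵥ v j = 0) :
    of v * (of v)ᵀ = diagonal fun i ↦ v i ⬝ᵥ v i := by
  ext i j
  rw [mul_apply']
  by_cases hij : i = j
  · subst hij
    simp [dotProduct]
  · simp only [ne_eq, hij, not_false_eq_true, diagonal_apply_ne]
    exact hv i j hij

/-- Hadamard's inequality for the Gram matrix `(vᵢ ⬝ᵥ M *ᵥ vⱼ)`, whose determinant is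
`det M * ∏ ‖vᵢ‖²` when the `vᵢ` are orthogonal. -/
theorem PosDef.det_mul_prod_le_prod {M : Matrix n n ℝ} (hM : M.PosDef) {v : n → n → ℝ}
    (hv0 : ∀ i, v i ≠ 0) (hv : ∀ i j, i ≠ j → v i ⬝ᵥ v j = 0) :
    M.det * ∏ i, v i ⬝ᵥ v i ≤ ∏ i, v i ⬝ᵥ M *ᵥ v i := by
  have hB : (of v * M * (of v)ᵀ).PosSemidef := by
    simpa using hM.posSemidef.mul_mul_conjTranspose_same (of v)
  have hdet : (of v * M * (of v)ᵀ).det = M.det * ∏ i, v i ⬝ᵥ v i := by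
    have hgram : (of v).det * (of v).det = ∏ i, v i ⬝ᵥ v i := by
      simpa [det_diagonal] using congrArg det (of_mul_transpose_eq_diagonal hv)
    rw [det_mul, det_mul, det_transpose]
    linear_combination M.det * hgram
  have hq : ∀ i, 0 < v i ⬝ᵥ M *ᵥ v i := fun i ↦ by
    simpa only [star_trivial] using hM.dotProduct_mulVec_pos (hv0 i)
  simpa only [hdet, of_mul_mul_transpose_apply_self] using
    hB.det_le_prod_diag fun i ↦ (of_mul_mul_transpose_apply_self v M i).symm ▸ hq i

/-- The quotient minimised by the extended `D` criterion, for the differences `v i = θ⁽ⁱ⁾ - θ⁽⁰⁾`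
and the information matrix `M`. -/
noncomputable def extendedDQuotient (M : Matrix n n ℝ) (v : n → n → ℝ) : ℝ :=
  ((1 / (Fintype.card n : ℝ)) * ∑ i, v i ⬝ᵥ M *ᵥ v i) /
    (∏ j, v j ⬝ᵥ v j) ^ ((1 : ℝ) / Fintype.card n)

theorem PosDef.det_rpow_le_extendedDQuotient [Nonempty n] {M : Matrix n n ℝ} (hM : M.PosDef)
    {v : n → n → ℝ} (hv0 : ∀ i, v i ≠ 0) (hv : ∀ i j, i ≠ j → v i ⬝ᵥ v j = 0) :
    M.det ^ ((1 : ℝ) / Fintype.card n) ≤ extendedDQuotient M v := by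
  have hnorm : 0 < ∏ j, v j ⬝ᵥ v j := Finset.prod_pos fun j _ ↦ by
    simpa only [star_trivial] using dotProduct_star_self_pos_iff.mpr (hv0 j)
  have hq : ∀ i, 0 ≤ v i ⬝ᵥ M *ᵥ v i := fun i ↦ by
    simpa only [star_trivial] using hM.posSemidef.dotProduct_mulVec_nonneg (v i)
  rw [extendedDQuotient, le_div_iff₀ (Real.rpow_pos_of_pos hnorm _),
    ← Real.mul_rpow hM.det_pos.le hnorm.le, one_div_mul_eq_div]
  calc (M.det * ∏ j, v j ⬝ᵥ v j) ^ ((1 : ℝ) / Fintype.card n)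
      ≤ (∏ i, v i ⬝ᵥ M *ᵥ v i) ^ ((1 : ℝ) / Fintype.card n) :=
        Real.rpow_le_rpow (mul_pos hM.det_pos hnorm).le (hM.det_mul_prod_le_prod hv0 hv)
          (by positivity)
    _ ≤ _ := Real.prod_rpow_one_div_card_le_sum_div_card hq

theorem PosDef.exists_extendedDQuotient_eq_det_rpow [Nonempty n] {M : Matrix n n ℝ}
    (hM : M.PosDef) :
    ∃ v : n → n → ℝ, (∀ i, v i ≠ 0) ∧ (∀ i j, i ≠ j → v i ⬝ᵥ v j = 0) ∧
      extendedDQuotient M v = M.det ^ ((1 : ℝ) / Fintype.card n) := by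
  set μ := hM.1.eigenvalues
  set u : n → n → ℝ := fun i ↦ hM.1.eigenvectorBasis i
  have hu : ∀ i j, u i ⬝ᵥ u j = if i = j then 1 else 0 := fun i j ↦ by
    rw [← orthonormal_iff_ite.mp hM.1.eigenvectorBasis.orthonormal i j]
    simp [u, EuclideanSpace.inner_eq_star_dotProduct, dotProduct_comm]
  have hμ : ∀ i, 0 < μ i := hM.eigenvalues_pos
  have hsq : ∀ i, (√(μ i))⁻¹ * (√(μ i))⁻¹ = (μ i)⁻¹ := fun i ↦ by
    rw [← mul_inv, Real.mul_self_sqrt (hμ i).le]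
  refine ⟨fun i ↦ (√(μ i))⁻¹ • u i, fun i ↦ ?_, fun i j hij ↦ ?_, ?_⟩
  · refine smul_ne_zero (inv_ne_zero (Real.sqrt_pos.mpr (hμ i)).ne') fun h ↦ ?_
    simpa [h] using hu i i
  · simp [dotProduct_smul, smul_dotProduct, hu, hij]
  · have hnorm : ∀ j, (√(μ j))⁻¹ • u j ⬝ᵥ (√(μ j))⁻¹ • u j = (μ j)⁻¹ := fun j ↦ by
      simp [dotProduct_smul, smul_dotProduct, hu, hsq]
    have hMnorm : ∀ i, (√(μ i))⁻¹ • u i ⬝ᵥ M *ᵥ (√(μ i))⁻¹ • u i = 1 := fun i ↦ by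
      have hMu : M *ᵥ u i = μ i • u i := hM.1.mulVec_eigenvectorBasis i
      simp only [mulVec_smul, hMu, dotProduct_smul, smul_dotProduct, smul_eq_mul, hu, if_true]
      rw [mul_one, mul_left_comm, hsq, mul_inv_cancel₀ (hμ i).ne']
    have hdet : M.det = ∏ i, μ i := by simp [μ, hM.1.det_eq_prod_eigenvalues]
    simp only [extendedDQuotient, hnorm, hMnorm, Finset.prod_inv_distrib, ← hdet]
    simp [Real.inv_rpow hM.det_pos.le]

theorem PosDef.isLeast_extendedDQuotient [Nonempty n] {M : Matrix n n ℝ} (hM : M.PosDef) :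
    IsLeast {t | ∃ v : n → n → ℝ, (∀ i, v i ≠ 0) ∧ (∀ i j, i ≠ j → v i ⬝ᵥ v j = 0) ∧
      t = extendedDQuotient M v} (M.det ^ ((1 : ℝ) / Fintype.card n)) := by
  refine ⟨?_, ?_⟩
  · obtain ⟨v, hv0, hv, heq⟩ := hM.exists_extendedDQuotient_eq_det_rpow
    exact ⟨v, hv0, hv, heq.symm⟩
  · rintro t ⟨v, hv0, hv, rfl⟩
    exact hM.det_rpow_le_extendedDQuotient hv0 hv

end Matrix

section infoM

variable {X : Type*} [Fintype X] {p : ℕ} (f : X → (Fin p → ℝ)) (ξ : X → ℝ)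

theorem dotProduct_infoM_mulVec (v : Fin p → ℝ) :
    v ⬝ᵥ infoM f ξ *ᵥ v = ∑ x, (f x ⬝ᵥ v) ^ 2 * ξ x := by
  simp only [infoM, sum_mulVec, smul_mulVec, vecMulVec_mulVec, op_smul_eq_smul, dotProduct_comm v,
    sum_dotProduct, smul_dotProduct, smul_eq_mul]
  exact Finset.sum_congr rfl fun x _ ↦ by ring

theorem infoM_posDef (hξ0 : ∀ x, 0 ≤ ξ x) (hξinv : IsUnit (infoM f ξ).det) :
    (infoM f ξ).PosDef := by
  have hpsd : (infoM f ξ).PosSemidef := posSemidef_sum _ fun x _ ↦ by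
    simpa using (posSemidef_vecMulVec_self_star (f x)).smul (hξ0 x)
  exact hpsd.posDef_iff_isUnit.mpr ((isUnit_iff_isUnit_det _).mpr hξinv)

end infoM

theorem stmt_17_general {X : Type*} [Fintype X] (p : ℕ) (hp : 0 < p)
    (f : X → (Fin p → ℝ))
    (ξ : X → ℝ) (hξ0 : ∀ x, 0 ≤ ξ x)
    (hξinv : IsUnit (infoM f ξ).det)
    (θ0 : Fin p → ℝ) :
    IsLeast {t : ℝ | ∃ θ : Fin p → (Fin p → ℝ),
        (∀ i, θ i - θ0 ≠ 0) ∧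
        (∀ i j, i ≠ j → (θ i - θ0) ⬝ᵥ (θ j - θ0) = 0) ∧
        t = ((1 / (p : ℝ)) * ∑ i, ∑ x, ((f x ⬝ᵥ θ i) - (f x ⬝ᵥ θ0)) ^ 2 * ξ x) /
          (∏ j, (θ j - θ0) ⬝ᵥ (θ j - θ0)) ^ ((1 : ℝ) / p)}
      ((infoM f ξ).det ^ ((1 : ℝ) / p)) := by
  have : Nonempty (Fin p) := Fin.pos_iff_nonempty.mp hp
  have hleast := (infoM_posDef f ξ hξ0 hξinv).isLeast_extendedDQuotient
  rw [Fintype.card_fin] at hleast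
  have hquot : ∀ θ : Fin p → Fin p → ℝ, extendedDQuotient (infoM f ξ) (fun i ↦ θ i - θ0) =
      ((1 / (p : ℝ)) * ∑ i, ∑ x, ((f x ⬝ᵥ θ i) - (f x ⬝ᵥ θ0)) ^ 2 * ξ x) /
        (∏ j, (θ j - θ0) ⬝ᵥ (θ j - θ0)) ^ ((1 : ℝ) / p) := fun θ ↦ by
    simp only [extendedDQuotient, dotProduct_infoM_mulVec, dotProduct_sub, Fintype.card_fin]
  convert hleast using 1
  ext t
  constructor
  · rintro ⟨θ, hθ0, hθ, rfl⟩
    exact ⟨fun i ↦ θ i - θ0, hθ0, hθ, (hquot θ).symm⟩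
  · rintro ⟨v, hv0, hv, rfl⟩
    refine ⟨fun i ↦ θ0 + v i, by simpa using hv0, by simpa using hv, ?_⟩
    rw [← hquot]
    simp

/-- Extended `D` criterion in the linear model `η(x,θ) = f(x)ᵀθ`: `det(M(ξ))^(1/p)` is
the minimum over tuples `(θ⁽¹⁾,…,θ⁽ᵖ⁾)` with nonzero pairwise orthogonal differences
`θ⁽ⁱ⁾−θ⁽⁰⁾` of `[(1/p) Σᵢ ‖η(·,θ⁽ⁱ⁾)−η(·,θ⁽⁰⁾)‖²_ξ] / [∏ⱼ ‖θ⁽ʲ⁾−θ⁽⁰⁾‖²]^(1/p)`. -/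
theorem stmt_17 {X : Type*} [Fintype X] (p : ℕ) (hp : 0 < p)
    (f : X → (Fin p → ℝ))
    (ξ : X → ℝ) (hξ0 : ∀ x, 0 ≤ ξ x) (hξ1 : ∑ x, ξ x = 1)
    (hξinv : IsUnit (infoM f ξ).det)
    (θ0 : Fin p → ℝ) :
    IsLeast {t : ℝ | ∃ θ : Fin p → (Fin p → ℝ),
        (∀ i, θ i - θ0 ≠ 0) ∧
        (∀ i j, i ≠ j → (θ i - θ0) ⬝ᵥ (θ j - θ0) = 0) ∧
        t = ((1 / (p : ℝ)) * ∑ i, ∑ x, ((f x ⬝ᵥ θ i) - (f x ⬝ᵥ θ0)) ^ 2 * ξ x) /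
          (∏ j, (θ j - θ0) ⬝ᵥ (θ j - θ0)) ^ ((1 : ℝ) / p)}
      ((infoM f ξ).det ^ ((1 : ℝ) / p)) :=
  stmt_17_general p hp f ξ hξ0 hξinv θ0
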